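/- Every connected cograph on at least two vertices is the join of two nonempty cographs. Equivalently, if G is a cograph on n ≥ 2 vertices and G is connected, then V(G) can be partitioned into nonempty sets A and B such that every vertex of A is adjacent to every vertex of B. -/

import Mathlib

/-!
If a cograph `G` on at least two vertices had `Gᶜ` connected as well, pick a vertex `v`: it has a
neighbour and a non-neighbour. In a connected cograph, deleting a vertex with a non-neighbour keeps
the graph connected, and cographs are closed under complements (`P₄` is self-complementary), so
`G - v` and its complement are again connected. By induction `G - v` is a single vertex, which would
have to be both adjacent and non-adjacent to `v`. Hence `Gᶜ` is disconnected, and a component of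
`Gᶜ` together with the remaining vertices is the required join.
-/

open SimpleGraph

/-- The join (product) of two graphs: disjoint union plus all cross edges. -/
def gJoin {α β : Type*} (G : SimpleGraph α) (H : SimpleGraph β) : SimpleGraph (α ⊕ β) where
  Adj u v := match u, v with
    | Sum.inl a, Sum.inl b => G.Adj a b
    | Sum.inr a, Sum.inr b => H.Adj a b
    | _, _ => True
  symm := ⟨by rintro (a|a) (b|b) h <;> simp_all <;> exact h.symm⟩
  loopless := ⟨by
    rintro (a|a) h
    · exact G.loopless.irrefl a h
    · exact H.loopless.irrefl a h⟩

/-- `H` is contained in `G` as a (not necessarily induced) subgraph. -/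
def Contains {β α : Type*} (H : SimpleGraph β) (G : SimpleGraph α) : Prop :=
  ∃ f : H →g G, Function.Injective f

/-- The complete bipartite graph `K_{s,t}`. -/
def KBip (s t : ℕ) : SimpleGraph (Fin s ⊕ Fin t) := completeBipartiteGraph (Fin s) (Fin t)

/-- A cograph: a graph with no induced path on four vertices. -/
def IsCograph {α : Type*} (G : SimpleGraph α) : Prop :=
  IsEmpty (pathGraph 4 ↪g G)

namespace SimpleGraph

variable {V : Type*} {G : SimpleGraph V}

lemma Reachable.exists_boundary_adj {S : Set V} {x y : V} (h : G.Reachable x y) (hx : x ∈ S)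
    (hy : y ∉ S) : ∃ u z, G.Adj u z ∧ u ∈ S ∧ z ∉ S ∧ G.Reachable u y ∧ G.Reachable z y := by
  classical
  obtain ⟨p⟩ := h
  obtain ⟨d, hd, hu, hz⟩ := p.exists_boundary_dart S hx hy
  exact ⟨d.fst, d.snd, d.adj, hu, hz, ⟨p.dropUntil _ (p.dart_fst_mem_support_of_mem_darts hd)⟩,
    ⟨p.dropUntil _ (p.dart_snd_mem_support_of_mem_darts hd)⟩⟩

lemma induce_compl (s : Set V) : Gᶜ.induce s = (G.induce s)ᶜ := by
  ext x y
  simp [Subtype.ext_iff]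

lemma Connected.exists_adj_reachable_induce_ne (hconn : G.Connected) {v : V}
    (t : {x | x ≠ v}) : ∃ x : {x | x ≠ v}, G.Adj v x ∧ (G.induce {x | x ≠ v}).Reachable x t := by
  let S : Set V := {x | ∃ h : x ≠ v, (G.induce {x | x ≠ v}).Reachable ⟨x, h⟩ t}
  obtain ⟨u, z, huz, ⟨hu, hut⟩, hz, -⟩ :=
    (hconn t v).exists_boundary_adj (S := S) ⟨t.2, .rfl⟩ fun h => h.1 rfl
  obtain rfl : z = v := by
    by_contra hzv
    have hzu : (G.induce {x | x ≠ v}).Adj ⟨z, hzv⟩ ⟨u, hu⟩ := huz.symm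
    exact hz ⟨hzv, hzu.reachable.trans hut⟩
  exact ⟨⟨u, hu⟩, huz.symm, hut⟩

lemma exists_join_partition_of_not_connected_compl [Nonempty V] (h : ¬Gᶜ.Connected) :
    ∃ A B : Set V, A.Nonempty ∧ B.Nonempty ∧ Disjoint A B ∧ A ∪ B = Set.univ ∧
      ∀ a ∈ A, ∀ b ∈ B, G.Adj a b := by
  obtain ⟨a, b, hab⟩ : ∃ a b, ¬Gᶜ.Reachable a b := by
    simpa [connected_iff, Preconnected] using h
  refine ⟨{x | Gᶜ.Reachable a x}, {x | Gᶜ.Reachable a x}ᶜ, ⟨a, .rfl⟩, ⟨b, hab⟩,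
    disjoint_compl_right, Set.union_compl_self _, fun x hx y hy => ?_⟩
  by_contra hxy
  exact hy (hx.trans (Adj.reachable ⟨fun h => hy (h ▸ hx), hxy⟩))

end SimpleGraph

namespace IsCograph

variable {V : Type*} {G : SimpleGraph V}

lemma false_of_inducedPath (hG : IsCograph G) {a b c d : V} (hab : G.Adj a b) (hbc : G.Adj b c)
    (hcd : G.Adj c d) (hac : ¬G.Adj a c) (had : ¬G.Adj a d) (hbd : ¬G.Adj b d) : False := by
  have hca : a ≠ c := by rintro rfl; exact had hcd
  have hda : a ≠ d := by rintro rfl; exact hac hcd.symm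
  have hdb : b ≠ d := by rintro rfl; exact had hab
  refine hG.false ⟨⟨![a, b, c, d], fun i j hij => ?_⟩, fun {i j} => ?_⟩
  · fin_cases i <;> fin_cases j <;> simp_all [hab.ne, hbc.ne, hcd.ne, eq_comm]
  · change G.Adj (![a, b, c, d] i) (![a, b, c, d] j) ↔ _
    fin_cases i <;> fin_cases j <;>
      simp [pathGraph_adj, hab, hbc, hcd, hab.symm, hbc.symm, hcd.symm, hac, had, hbd,
        adj_comm G _ a, adj_comm G d b]

def pathGraphFourIsoCompl : pathGraph 4 ≃g (pathGraph 4)ᶜ where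
  toEquiv := ⟨![1, 3, 0, 2], ![2, 0, 3, 1], by decide, by decide⟩
  map_rel_iff' {i j} := by
    simp only [compl_adj, pathGraph_adj]
    fin_cases i <;> fin_cases j <;> decide

lemma compl (hG : IsCograph G) : IsCograph Gᶜ :=
  ⟨fun f => hG.false (Embedding.complEquiv.symm (f.comp pathGraphFourIsoCompl.symm.toEmbedding))⟩

lemma induce (hG : IsCograph G) (s : Set V) : IsCograph (G.induce s) :=
  ⟨fun f => hG.false ((Embedding.induce s).comp f)⟩

/-- If `v` has a non-neighbour `w`, a component of `G - v` avoiding `w` would give an induced path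
`y - v - x - z` with `x` a neighbour and `z` a non-neighbour of `v` in the component of `w`. -/
lemma connected_induce_ne (hG : IsCograph G) (hconn : G.Connected) {v w : V} (hwv : w ≠ v)
    (hvw : ¬G.Adj v w) : (G.induce {x | x ≠ v}).Connected := by
  set H := G.induce {x | x ≠ v}
  let w' : {x | x ≠ v} := ⟨w, hwv⟩
  have : Nonempty {x | x ≠ v} := ⟨w'⟩
  suffices ∀ t, H.Reachable w' t from
    connected_iff _ |>.mpr ⟨fun s t => (this s).symm.trans (this t), ‹_›⟩
  by_contra! ⟨t, hwt⟩
  obtain ⟨y, hvy, hyt⟩ := hconn.exists_adj_reachable_induce_ne t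
  obtain ⟨x₀, hvx₀, hx₀w⟩ := hconn.exists_adj_reachable_induce_ne w'
  obtain ⟨x, z, hxz, hvx, hvz, hxw, hzw⟩ :=
    hx₀w.exists_boundary_adj (S := {x : {x | x ≠ v} | G.Adj v x}) hvx₀ hvw
  have hyw : ¬H.Reachable y w' := fun h => hwt (h.symm.trans hyt)
  refine hG.false_of_inducedPath hvy.symm hvx hxz (fun h => ?_) (fun h => ?_) hvz
  · exact hyw ((Adj.reachable (G := H) h).trans hxw)
  · exact hyw ((Adj.reachable (G := H) h).trans hzw)

theorem subsingleton_of_connected_compl [Finite V] (hG : IsCograph G) (hconn : G.Connected)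
    (hconn' : Gᶜ.Connected) : Subsingleton V := by
  induction V using Finite.induction_subsingleton_or_nontrivial with
  | hbase => infer_instance
  | hstep V ih =>
    exfalso
    obtain ⟨v⟩ := hconn.nonempty
    obtain ⟨u, hvu⟩ := hconn.preconnected.exists_adj_of_nontrivial v
    obtain ⟨w, hvw⟩ := hconn'.preconnected.exists_adj_of_nontrivial v
    have hsmall : Nat.card {x | x ≠ v} < Nat.card V := Finite.card_subtype_lt (x := v) (by simp)
    have : Subsingleton {x | x ≠ v} := ih _ hsmall (hG.induce _)
      (hG.connected_induce_ne hconn hvw.ne.symm hvw.2)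
      (induce_compl (G := G) _ ▸ hG.compl.connected_induce_ne hconn' hvu.ne.symm fun h => h.2 hvu)
    have huw : u = w := congrArg Subtype.val
      (Subsingleton.elim (⟨u, hvu.ne.symm⟩ : {x | x ≠ v}) ⟨w, hvw.ne.symm⟩)
    exact hvw.2 (huw ▸ hvu)

end IsCograph

theorem connected_cograph_is_join {V : Type*} [Fintype V] (G : SimpleGraph V)
    (hcard : 2 ≤ Fintype.card V) (hG : IsCograph G) (hconn : G.Connected) :
    ∃ A B : Set V, A.Nonempty ∧ B.Nonempty ∧ Disjoint A B ∧ A ∪ B = Set.univ ∧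
      ∀ a ∈ A, ∀ b ∈ B, G.Adj a b := by
  have : Nontrivial V := Fintype.one_lt_card_iff_nontrivial.mp hcard
  refine exists_join_partition_of_not_connected_compl fun hconn' => ?_
  exact not_subsingleton V (hG.subsingleton_of_connected_compl hconn hconn')
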